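/- arXiv:1803.07582 — 3 statements merged into one kernel-verified Lean document; each statement's English description precedes it below -/
import Mathlib

section
/- Let n ≥ 1 and D ∈ M_n(ℝ), and let λ ∈ ℝ satisfy 0 < |λ| < 2π. Then (exp(λD) − I)/(e^λ − 1) = Σ_{k=0}^∞ ( Σ_{l=0}^{k} (k!/(k−l)!) · B_{k−l} · D^{l+1}/(l+1)! ) · λ^k/k!, where B_m denotes the m-th Bernoulli number (with the convention Σ_{m=0}^∞ B_m x^m/m! = x/(e^x − 1)), the series on the right converging in M_n(ℝ). -/
/-!
For `|x| < 2π` the Bernoulli series `∑ B_m x^m/m!` converges absolutely, because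
`(2π)^(2k) |B_(2k)| / (2k)! = 2 ζ(2k) ≤ 2 ζ(2)` and the odd Bernoulli numbers beyond `B_1` vanish.
Its Cauchy product with `e^x - 1 = ∑ x^(l+1)/(l+1)!` is `x`, by the recursion
`∑_{j<n} C(n,j) B_j = [n = 1]`, so it sums to `x/(e^x - 1)`. Dividing by `λ` and taking the
Cauchy product, now of a scalar series with a series in a Banach algebra, with
`exp(λD) - 1 = ∑ (λD)^(l+1)/(l+1)!` gives `(e^λ - 1)⁻¹ (exp(λD) - 1)`; reversing the inner sum
puts the terms in the stated form.
-/

open Real Finset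
open scoped Nat

lemma two_pi_pow_mul_abs_bernoulli_two_mul_le {k : ℕ} (hk : k ≠ 0) :
    (2 * π) ^ (2 * k) * |(bernoulli (2 * k) : ℝ)| ≤ 4 * (2 * k)! := by
  set ζ := (-1 : ℝ) ^ (k + 1) * (2 : ℝ) ^ (2 * k - 1) * π ^ (2 * k) *
    bernoulli (2 * k) / (2 * k)!
  have hζ : HasSum (fun n : ℕ => 1 / (n : ℝ) ^ (2 * k)) ζ := hasSum_zeta_nat hk
  have hζ_le : ζ ≤ π ^ 2 / 6 := by
    refine hasSum_le (fun n => ?_) hζ hasSum_zeta_two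
    rcases n.eq_zero_or_pos with rfl | hn
    · simp [hk]
    · gcongr
      · exact_mod_cast hn
      · omega
  have h2k : (2 : ℝ) ^ (2 * k) = 2 * 2 ^ (2 * k - 1) := by
    rw [← pow_succ']; congr 1; omega
  calc (2 * π) ^ (2 * k) * |(bernoulli (2 * k) : ℝ)| = 2 * (2 * k)! * |ζ| := by
        simp only [ζ, abs_div, abs_mul, abs_pow, abs_neg, abs_one, one_pow, one_mul, abs_two,
          abs_of_pos pi_pos, Nat.abs_cast, mul_pow, h2k]
        field_simp
    _ = 2 * (2 * k)! * ζ := by rw [abs_of_nonneg (hζ.nonneg fun n => by positivity)]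
    _ ≤ 2 * (2 * k)! * (π ^ 2 / 6) := by gcongr
    _ ≤ 2 * (2 * k)! * 2 := by gcongr; nlinarith [pi_lt_d2, pi_pos]
    _ = 4 * (2 * k)! := by ring

lemma two_pi_pow_mul_abs_bernoulli_le (m : ℕ) :
    (2 * π) ^ m * |(bernoulli m : ℝ)| ≤ 4 * m ! := by
  obtain ⟨k, rfl | rfl⟩ := m.even_or_odd'
  · rcases eq_or_ne k 0 with rfl | hk
    · norm_num
    · exact two_pi_pow_mul_abs_bernoulli_two_mul_le hk
  · rcases eq_or_ne k 0 with rfl | hk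
    · norm_num [bernoulli_one]
      linarith [pi_lt_d2]
    · rw [bernoulli_eq_zero_of_odd (odd_two_mul_add_one k) (by omega)]
      norm_num

lemma summable_norm_bernoulli_mul_pow_div {x : ℝ} (hx : |x| < 2 * π) :
    Summable fun m : ℕ => ‖(bernoulli m : ℝ) * x ^ m / (m ! : ℝ)‖ := by
  have hr : |x| / (2 * π) < 1 := (div_lt_one (by positivity)).mpr hx
  refine .of_nonneg_of_le (fun _ => norm_nonneg _) (fun m => ?_)
    ((summable_geometric_of_lt_one (by positivity) hr).mul_left 4)
  calc ‖(bernoulli m : ℝ) * x ^ m / (m ! : ℝ)‖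
      = (2 * π) ^ m * |(bernoulli m : ℝ)| / m ! * (|x| / (2 * π)) ^ m := by
        rw [norm_div, norm_mul, norm_pow, Real.norm_eq_abs, Real.norm_eq_abs,
          RCLike.norm_natCast, div_pow]
        field_simp
    _ ≤ 4 * (|x| / (2 * π)) ^ m := by
        gcongr
        rw [div_le_iff₀ (by positivity)]
        exact two_pi_pow_mul_abs_bernoulli_le m

section BanachAlgebra

variable {A : Type*} [NormedRing A] [NormedAlgebra ℝ A]

lemma summable_norm_exp_sub_one (a : A) :
    Summable fun l : ℕ => ‖((l + 1)! : ℝ)⁻¹ • a ^ (l + 1)‖ :=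
  (summable_nat_add_iff 1).mpr (NormedSpace.norm_expSeries_summable' (𝕂 := ℝ) a)

variable [CompleteSpace A]

lemma hasSum_exp_sub_one (a : A) :
    HasSum (fun l : ℕ => ((l + 1)! : ℝ)⁻¹ • a ^ (l + 1)) (NormedSpace.exp a - 1) := by
  simpa using (hasSum_nat_add_iff' 1).mpr (NormedSpace.exp_series_hasSum_exp' (𝕂 := ℝ) a)

lemma hasSum_sum_range_smul_of_summable_norm {f : ℕ → ℝ} {g : ℕ → A} {s : ℝ} {t : A}
    (hf : HasSum f s) (hg : HasSum g t) (hfn : Summable fun n => ‖f n‖)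
    (hgn : Summable fun n => ‖g n‖) :
    HasSum (fun n => ∑ k ∈ range (n + 1), f k • g (n - k)) (s • t) := by
  have hfn' : Summable fun n => ‖f n • (1 : A)‖ := by
    simpa only [norm_smul] using hfn.mul_right ‖(1 : A)‖
  simpa only [smul_mul_assoc, one_mul, (hf.smul_const (1 : A)).tsum_eq, hg.tsum_eq] using
    hasSum_sum_range_mul_of_summable_norm hfn' hgn

end BanachAlgebra

lemma sum_range_bernoulli_mul_exp_sub_one_coeff (x : ℝ) (k : ℕ) :
    ∑ j ∈ range (k + 1),
        (bernoulli j : ℝ) * x ^ j / j ! * (((k - j + 1)! : ℝ)⁻¹ • x ^ (k - j + 1))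
      = if k = 0 then x else 0 := by
  have hterm : ∀ j ∈ range (k + 1),
      (bernoulli j : ℝ) * x ^ j / j ! * (((k - j + 1)! : ℝ)⁻¹ • x ^ (k - j + 1))
        = x ^ (k + 1) / (k + 1)! * ((k + 1).choose j * bernoulli j) := by
    intro j hj
    have hjk : j ≤ k := Nat.lt_succ_iff.mp (mem_range.mp hj)
    rw [Nat.cast_choose ℝ (by omega : j ≤ k + 1), show k + 1 - j = k - j + 1 by omega,
      smul_eq_mul, show k + 1 = j + (k - j + 1) by omega, pow_add]
    field_simp
    ring
  have hrec : ∑ j ∈ range (k + 1), ((k + 1).choose j : ℝ) * bernoulli j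
      = if k = 0 then 1 else 0 := by
    have h := congrArg ((↑) : ℚ → ℝ) (sum_bernoulli (k + 1))
    push_cast [add_eq_right] at h
    exact h.trans (by split_ifs <;> norm_num)
  rw [sum_congr rfl hterm, ← mul_sum, hrec]
  split_ifs with hk <;> simp [hk]

theorem hasSum_bernoulli_mul_pow_div {x : ℝ} (hx0 : x ≠ 0) (hx : |x| < 2 * π) :
    HasSum (fun m : ℕ => (bernoulli m : ℝ) * x ^ m / m !) (x / (exp x - 1)) := by
  have hB := summable_norm_bernoulli_mul_pow_div hx
  have hcauchy := hasSum_sum_range_mul_of_summable_norm hB (summable_norm_exp_sub_one x)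
  simp only [(hasSum_exp_sub_one x).tsum_eq, ← exp_eq_exp_ℝ,
    sum_range_bernoulli_mul_exp_sub_one_coeff] at hcauchy
  have hexp : exp x - 1 ≠ 0 := sub_ne_zero.mpr ((exp_eq_one_iff x).not.mpr hx0)
  have hval : ∑' m : ℕ, (bernoulli m : ℝ) * x ^ m / m ! = x / (exp x - 1) :=
    (eq_div_iff hexp).mpr ((hasSum_ite_eq 0 x).unique hcauchy).symm
  exact hval ▸ hB.of_norm.hasSum

lemma sum_range_bernoulli_smul_exp_sub_one_coeff {A : Type*} [Ring A] [Algebra ℝ A] (D : A)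
    {lam : ℝ} (h0 : lam ≠ 0) (k : ℕ) :
    ∑ j ∈ range (k + 1), ((bernoulli j : ℝ) * lam ^ j / j ! / lam) •
        (((k - j + 1)! : ℝ)⁻¹ • (lam • D) ^ (k - j + 1))
      = (lam ^ k / k !) • ∑ l ∈ range (k + 1),
          ((k ! / (k - l)! : ℝ) * bernoulli (k - l)) • (((l + 1)! : ℝ)⁻¹ • D ^ (l + 1)) := by
  rw [← sum_range_reflect, smul_sum]
  refine sum_congr rfl fun l hl => ?_
  obtain ⟨m, rfl⟩ := Nat.exists_eq_add_of_le (Nat.lt_succ_iff.mp (mem_range.mp hl))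
  simp only [Nat.add_sub_cancel, Nat.add_sub_cancel_left, smul_pow, smul_smul]
  congr 1
  field_simp
  ring

theorem hasSum_bernoulli_series_smul_exp_sub_one {A : Type*} [NormedRing A] [NormedAlgebra ℝ A]
    [CompleteSpace A] (D : A) {lam : ℝ} (h0 : lam ≠ 0) (h2 : |lam| < 2 * π) :
    HasSum
      (fun k : ℕ => (lam ^ k / k !) • ∑ l ∈ range (k + 1),
        ((k ! / (k - l)! : ℝ) * bernoulli (k - l)) • (((l + 1)! : ℝ)⁻¹ • D ^ (l + 1)))
      ((exp lam - 1)⁻¹ • (NormedSpace.exp (lam • D) - 1)) := by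
  have hB := (hasSum_bernoulli_mul_pow_div h0 h2).div_const lam
  rw [div_div_cancel_left' h0] at hB
  have hBn : Summable fun m : ℕ => ‖(bernoulli m : ℝ) * lam ^ m / (m ! : ℝ) / lam‖ := by
    simpa only [norm_div] using (summable_norm_bernoulli_mul_pow_div h2).div_const ‖lam‖
  simpa only [sum_range_bernoulli_smul_exp_sub_one_coeff D h0] using
    hasSum_sum_range_smul_of_summable_norm hB (hasSum_exp_sub_one (lam • D)) hBn
      (summable_norm_exp_sub_one _)

theorem pwp_eq_bernoulli_series_general {n : ℕ} (D : Matrix (Fin n) (Fin n) ℝ)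
    (lam : ℝ) (hlam : 0 < |lam|) (hlam' : |lam| < 2 * Real.pi) :
    HasSum
      (fun k : ℕ =>
        (lam ^ k / (Nat.factorial k : ℝ)) •
          ∑ l ∈ Finset.range (k + 1),
            (((Nat.factorial k : ℝ) / (Nat.factorial (k - l) : ℝ)) * (bernoulli (k - l) : ℝ)) •
              ((Nat.factorial (l + 1) : ℝ)⁻¹ • D ^ (l + 1)))
      ((Real.exp lam - 1)⁻¹ • (NormedSpace.exp (lam • D) - 1)) := by
  -- Any submultiplicative norm works: it induces the product topology used by `HasSum` here.
  let _ := Matrix.linftyOpNormedRing (n := Fin n) (α := ℝ)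
  let _ := Matrix.linftyOpNormedAlgebra (n := Fin n) (R := ℝ) (α := ℝ)
  exact hasSum_bernoulli_series_smul_exp_sub_one D (abs_pos.mp hlam) hlam'

/-- For `0 < |λ| < 2π`, the PWP matrix `(exp(λD) − I)/(e^λ − 1)` is given by the convergent
series `∑_{k=0}^∞ (∑_{l=0}^{k} (k)_l B_{k−l} D^{l+1}/(l+1)!) λ^k/k!`, where `B_m` are the
Bernoulli numbers (convention `∑ B_m x^m/m! = x/(e^x − 1)`). -/
theorem pwp_eq_bernoulli_series {n : ℕ} (hn : 1 ≤ n) (D : Matrix (Fin n) (Fin n) ℝ)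
    (lam : ℝ) (hlam : 0 < |lam|) (hlam' : |lam| < 2 * Real.pi) :
    HasSum
      (fun k : ℕ =>
        (lam ^ k / (Nat.factorial k : ℝ)) •
          ∑ l ∈ Finset.range (k + 1),
            (((Nat.factorial k : ℝ) / (Nat.factorial (k - l) : ℝ)) * (bernoulli (k - l) : ℝ)) •
              ((Nat.factorial (l + 1) : ℝ)⁻¹ • D ^ (l + 1)))
      ((Real.exp lam - 1)⁻¹ • (NormedSpace.exp (lam • D) - 1)) :=
  pwp_eq_bernoulli_series_general D lam hlam hlam'
end

section
/- Let n ≥ 1 and let D ∈ M_n(ℝ) have nonnegative entries with m = Σ_{i,j} D_{ij} > 0, and let π be a partition of {1,…,n}. For λ > 0 write T(λ) = (exp(λD) − I)/(e^λ − 1), M(λ) = Σ_{i,j} T(λ)_{ij}, E_i(λ) = Σ_j T(λ)_{ij}, F_j(λ) = Σ_i T(λ)_{ji}, and Q_λ(π) = Σ_{i ∼ j} ( T(λ)_{ij}/M(λ) − E_i(λ) F_j(λ)/M(λ)² ), the sum over ordered pairs (i,j) of nodes lying in the same block of π. Then lim_{λ → 0⁺} Q_λ(π) = Q(π), where Q(π)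 = Σ_{i ∼ j} ( D_{ij}/m − (d_i^{in}/m)(d_j^{out}/m) ) is the Girvan–Newman modularity, with d_i^{in} = Σ_j D_{ij} and d_j^{out} = Σ_i D_{ij}. -/
/-!
`T(λ) = (exp(λD) − I)/(e^λ − 1)` is the quotient of the difference quotients at `0` of
`λ ↦ exp(λD) − I` and `λ ↦ e^λ − 1`, so it tends to the ratio `D / 1` of their derivatives.
Modularity is a rational function of the matrix entries whose only denominator is the total
weight, hence continuous at `D` as soon as `m ≠ 0`.
-/

open scoped BigOperators Classical

/-- Girvan–Newman-type modularity of a matrix `A` with respect to an equivalence relation `r`: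
`∑_{i ∼ j} (A_{ij}/M − (E_i/M)(F_j/M))` where `M = ∑_{i,j} A_{ij}`, `E_i = ∑_j A_{ij}` is the
`i`-th row sum and `F_j = ∑_i A_{ij}` is the `j`-th column sum. -/
noncomputable def modularity {n : ℕ} (A : Matrix (Fin n) (Fin n) ℝ)
    (r : Fin n → Fin n → Prop) : ℝ :=
  ∑ i : Fin n, ∑ j : Fin n,
    if r i j then
      A i j / (∑ a : Fin n, ∑ b : Fin n, A a b) -
        (∑ b : Fin n, A i b) / (∑ a : Fin n, ∑ b : Fin n, A a b) *
          ((∑ a : Fin n, A a j) / (∑ a : Fin n, ∑ b : Fin n, A a b))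
    else 0

/-- The PWP matrix `T(D,λ) = (exp(λD) − I)/(e^λ − 1)`. -/
noncomputable def pwpMatrix {n : ℕ} (D : Matrix (Fin n) (Fin n) ℝ) (lam : ℝ) :
    Matrix (Fin n) (Fin n) ℝ :=
  (Real.exp lam - 1)⁻¹ • (NormedSpace.exp (lam • D) - 1)

open Filter Topology

theorem tendsto_inv_smul_of_hasDerivAt {𝕜 E : Type*} [NontriviallyNormedField 𝕜]
    [NormedAddCommGroup E] [NormedSpace 𝕜 E] {f : 𝕜 → E} {g : 𝕜 → 𝕜} {f' : E} {g' : 𝕜} {x : 𝕜}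
    (hf : HasDerivAt f f' x) (hg : HasDerivAt g g' x) (hfx : f x = 0) (hgx : g x = 0)
    (hg' : g' ≠ 0) :
    Tendsto (fun t => (g t)⁻¹ • f t) (𝓝[≠] x) (𝓝 (g'⁻¹ • f')) := by
  refine ((hasDerivAt_iff_tendsto_slope.mp hg).inv₀ hg' |>.smul
    (hasDerivAt_iff_tendsto_slope.mp hf)).congr' ?_
  filter_upwards [self_mem_nhdsWithin] with t ht
  have hxt : t - x ≠ 0 := sub_ne_zero.mpr ht
  simp only [slope, vsub_eq_sub, hfx, hgx, sub_zero, smul_eq_mul, mul_inv, inv_inv, smul_smul]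
  rw [mul_comm, ← mul_assoc, inv_mul_cancel₀ hxt, one_mul]

theorem tendsto_pwpMatrix {n : ℕ} (D : Matrix (Fin n) (Fin n) ℝ) :
    Tendsto (pwpMatrix D) (𝓝[≠] 0) (𝓝 D) := by
  -- Any normed algebra structure inducing the product topology serves to differentiate `exp`.
  let : NormedRing (Matrix (Fin n) (Fin n) ℝ) := Matrix.linftyOpNormedRing
  let : NormedAlgebra ℝ (Matrix (Fin n) (Fin n) ℝ) := Matrix.linftyOpNormedAlgebra
  have hexp := hasDerivAt_exp_smul_const (𝕂 := ℝ) D 0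
  rw [zero_smul, NormedSpace.exp_zero, one_mul] at hexp
  have := tendsto_inv_smul_of_hasDerivAt (hexp.sub_const 1) ((Real.hasDerivAt_exp 0).sub_const 1)
    (by simp) (by simp) (by simp)
  rwa [Real.exp_zero, inv_one, one_smul] at this

theorem continuousAt_modularity {n : ℕ} (r : Fin n → Fin n → Prop)
    {A : Matrix (Fin n) (Fin n) ℝ} (hA : ∑ a, ∑ b, A a b ≠ 0) :
    ContinuousAt (fun B : Matrix (Fin n) (Fin n) ℝ => modularity B r) A := by
  refine tendsto_finsetSum _ fun i _ => tendsto_finsetSum _ fun j _ => ?_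
  split_ifs
  · apply ContinuousAt.tendsto
    fun_prop (disch := exact hA)
  · exact continuousAt_const

theorem deformed_modularity_tendsto_modularity_general {n : ℕ}
    (D : Matrix (Fin n) (Fin n) ℝ)
    (hm : 0 < ∑ i : Fin n, ∑ j : Fin n, D i j)
    (r : Fin n → Fin n → Prop) :
    Filter.Tendsto (fun lam : ℝ => modularity (pwpMatrix D lam) r)
      (nhdsWithin 0 (Set.Ioi 0)) (nhds (modularity D r)) :=
  (continuousAt_modularity r hm.ne').tendsto.comp
    ((tendsto_pwpMatrix D).mono_left (nhdsGT_le_nhdsNE 0))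

/-- For a nonnegative weighted network `D` with total weight `m > 0` and a partition (given by
an equivalence relation `r`) of the nodes, the deformed modularity `Q_λ(π)`, built from the PWP
matrix `T(D,λ)`, tends to the Girvan–Newman modularity `Q(π)` as `λ → 0⁺`. -/
theorem deformed_modularity_tendsto_modularity {n : ℕ} (hn : 1 ≤ n)
    (D : Matrix (Fin n) (Fin n) ℝ) (hD : ∀ i j, 0 ≤ D i j)
    (hm : 0 < ∑ i : Fin n, ∑ j : Fin n, D i j)
    (r : Fin n → Fin n → Prop) (hr : Equivalence r) :
    Filter.Tendsto (fun lam : ℝ => modularity (pwpMatrix D lam) r)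
      (nhdsWithin 0 (Set.Ioi 0)) (nhds (modularity D r)) :=
  deformed_modularity_tendsto_modularity_general D hm r
end

section
/- For n ≥ 1, let r_n denote the number of rankings of the set {1,…,n}, i.e., the number of total preorders on {1,…,n} (equivalently, the number of pairs consisting of a partition of {1,…,n} together with a linear order on its blocks), and set r_0 = 0. Then the exponential generating function of (r_n) satisfies Σ_{n=0}^∞ r_n x^n/n! = (e^x − 1)/(2 − e^x) as an identity of formal power series over ℚ; equivalently, (2 − e^x) · Σ_{n=0}^∞ r_n x^n/n! = e^x − 1. -/
/-- A ranking on `Fin n` is a relation of the form `i ≤ j ↔ f i ≤ f j` for some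
`f : Fin n → ℕ`; equivalently it is a total preorder, equivalently a partition together with
a linear order on its blocks. -/
def IsRanking {n : ℕ} (R : Fin n → Fin n → Prop) : Prop :=
  ∃ f : Fin n → ℕ, ∀ i j, R i j ↔ f i ≤ f j

/-- The number of rankings (total preorders) on `{1, …, n}`. -/
noncomputable def numRankings (n : ℕ) : ℕ :=
  Nat.card {R : Fin n → Fin n → Prop // IsRanking R}

/-!
A ranking of a nonempty finite set is the same as a nonempty bottom block `S` together with a
ranking of the complement of `S`. Hence `r n = ∑_{k ≥ 1} (n choose k) r (n - k)` for `n ≥ 1`,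
where `r 0 = 1` counts the empty ranking. For `A = ∑ r n xⁿ/n!` this says `eˣ A = 2A - 1`, i.e.
`(2 - eˣ)(A - 1) = eˣ - 1`, and the series of the statement is `A - 1`.
-/

open Finset PowerSeries

def Ranking (α : Type*) : Type _ :=
  {R : α → α → Prop // ∃ f : α → ℕ, ∀ i j, R i j ↔ f i ≤ f j}

namespace Ranking

variable {α β : Type*}

@[ext]
theorem ext {R R' : Ranking α} (h : ∀ i j, R.1 i j ↔ R'.1 i j) : R = R' :=
  Subtype.ext <| funext₂ fun i j => propext (h i j)

instance [Finite α] : Finite (Ranking α) :=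
  Subtype.finite

def congr (e : α ≃ β) : Ranking α ≃ Ranking β where
  toFun R := ⟨fun i j => R.1 (e.symm i) (e.symm j),
    let ⟨f, hf⟩ := R.2; ⟨f ∘ e.symm, fun _ _ => hf _ _⟩⟩
  invFun R := ⟨fun i j => R.1 (e i) (e j), let ⟨f, hf⟩ := R.2; ⟨f ∘ e, fun _ _ => hf _ _⟩⟩
  left_inv R := Subtype.ext <| by simp
  right_inv R := Subtype.ext <| by simp

theorem card_eq_numRankings [Fintype α] : Nat.card (Ranking α) = numRankings (Fintype.card α) :=
  Nat.card_congr (congr (Fintype.equivFin α))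

def restrict (R : Ranking α) (p : α → Prop) : Ranking (Subtype p) :=
  ⟨fun i j => R.1 i j, let ⟨f, hf⟩ := R.2; ⟨fun i => f i, fun _ _ => hf _ _⟩⟩

open Classical in
noncomputable def bottom [Fintype α] (R : Ranking α) : Finset α :=
  {i | ∀ j, R.1 i j}

theorem mem_bottom [Fintype α] {R : Ranking α} {i : α} : i ∈ R.bottom ↔ ∀ j, R.1 i j := by
  simp [bottom]

theorem bottom_nonempty [Fintype α] [Nonempty α] (R : Ranking α) : R.bottom.Nonempty := by
  obtain ⟨f, hf⟩ := R.2
  obtain ⟨i, -, hi⟩ := exists_min_image univ f univ_nonempty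
  exact ⟨i, mem_bottom.2 fun j => (hf i j).2 (hi j (mem_univ j))⟩

def glue (S : Finset α) (R : Ranking {i // i ∉ S}) : Ranking α :=
  ⟨fun i j => i ∈ S ∨ ∃ (hi : i ∉ S) (hj : j ∉ S), R.1 ⟨i, hi⟩ ⟨j, hj⟩, by
    classical
    obtain ⟨f, hf⟩ := R.2
    refine ⟨fun i => if h : i ∈ S then 0 else f ⟨i, h⟩ + 1, fun i j => ?_⟩
    by_cases hi : i ∈ S <;> by_cases hj : j ∈ S <;> simp [hi, hj, hf]⟩

theorem bottom_glue [Fintype α] {S : Finset α} (hS : S.Nonempty) (R : Ranking {i // i ∉ S}) :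
    (glue S R).bottom = S := by
  ext i
  refine ⟨fun hi => ?_, fun hi => mem_bottom.2 fun _ => Or.inl hi⟩
  obtain ⟨j, hj⟩ := hS
  obtain hiS | ⟨-, hjS, -⟩ := mem_bottom.1 hi j
  exacts [hiS, absurd hj hjS]

theorem restrict_glue (S : Finset α) (R : Ranking {i // i ∉ S}) :
    (glue S R).restrict (· ∉ S) = R := by
  ext i j
  refine ⟨?_, fun h => Or.inr ⟨i.2, j.2, h⟩⟩
  rintro (hi | ⟨_, _, h⟩)
  · exact absurd hi i.2
  · exact h

theorem glue_bottom_restrict [Fintype α] (R : Ranking α) :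
    glue R.bottom (R.restrict (· ∉ R.bottom)) = R := by
  obtain ⟨f, hf⟩ := R.2
  ext i j
  refine ⟨?_, fun h => ?_⟩
  · rintro (hi | ⟨_, _, h⟩)
    · exact mem_bottom.1 hi j
    · exact h
  · by_cases hi : i ∈ R.bottom
    · exact Or.inl hi
    -- if `j` were in the bottom block, then so would be `i` by transitivity
    refine Or.inr ⟨hi, fun hj => hi (mem_bottom.2 fun k => ?_), h⟩
    exact (hf i k).2 (((hf i j).1 h).trans ((hf j k).1 (mem_bottom.1 hj k)))

theorem glue_injective [Fintype α] :
    Function.Injective fun x : Σ S : {S : Finset α // S.Nonempty}, Ranking {i // i ∉ S.1} =>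
      glue x.1.1 x.2 := by
  rintro ⟨⟨S, hS⟩, R⟩ ⟨⟨S', hS'⟩, R'⟩ h
  obtain rfl : S = S' := by
    simpa only [bottom_glue hS, bottom_glue hS'] using congrArg bottom h
  obtain rfl : R = R' := by
    simpa only [restrict_glue] using congrArg (restrict · (· ∉ S)) h
  rfl

noncomputable def glueEquiv [Fintype α] [Nonempty α] :
    (Σ S : {S : Finset α // S.Nonempty}, Ranking {i // i ∉ S.1}) ≃ Ranking α :=
  Equiv.ofBijective _
    ⟨glue_injective, fun R => ⟨⟨⟨R.bottom, R.bottom_nonempty⟩, R.restrict _⟩,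
      glue_bottom_restrict R⟩⟩

theorem card_eq_sum_numRankings [Fintype α] [Nonempty α] :
    Nat.card (Ranking α) =
      ∑ S : {S : Finset α // S.Nonempty}, numRankings (Fintype.card α - #S.1) := by
  classical
  rw [← Nat.card_congr glueEquiv, Nat.card_sigma]
  refine sum_congr rfl fun S _ => ?_
  rw [card_eq_numRankings, Fintype.card_subtype_compl, Fintype.card_coe]

end Ranking

theorem numRankings_zero : numRankings 0 = 1 := by
  rw [← Fintype.card_fin 0, ← Ranking.card_eq_numRankings, Nat.card_eq_one_iff_unique]
  exact ⟨⟨fun _ _ => Ranking.ext fun i => i.elim0⟩,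
    ⟨⟨fun _ _ => True, fun _ => 0, fun i => i.elim0⟩⟩⟩

theorem sum_choose_mul_numRankings {n : ℕ} (hn : n ≠ 0) :
    ∑ p ∈ antidiagonal n, n.choose p.1 * numRankings p.2 = 2 * numRankings n := by
  have : Nonempty (Fin n) := ⟨⟨0, Nat.pos_of_ne_zero hn⟩⟩
  have hsum_all : ∑ S : Finset (Fin n), numRankings (n - #S) =
      ∑ p ∈ antidiagonal n, n.choose p.1 * numRankings p.2 := by
    rw [← powerset_univ, sum_powerset_apply_card (fun k => numRankings (n - k)),
      Nat.sum_antidiagonal_eq_sum_range_succ (fun i j => n.choose i * numRankings j),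
      card_univ, Fintype.card_fin]
    simp only [smul_eq_mul]
  have hsum_nonempty : ∑ S : Finset (Fin n), numRankings (n - #S) =
      numRankings n + ∑ S : {S : Finset (Fin n) // S.Nonempty}, numRankings (n - #S.1) := by
    rw [← add_sum_erase univ _ (mem_univ ∅), card_empty, Nat.sub_zero,
      sum_subtype (p := Finset.Nonempty) _ fun S => by simp [nonempty_iff_ne_empty]]
  have hbottom := Ranking.card_eq_numRankings (α := Fin n)
  rw [Ranking.card_eq_sum_numRankings, Fintype.card_fin] at hbottom
  omega

section ExponentialGeneratingFunction

variable {K : Type*} [Field K]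

noncomputable def egf (a : ℕ → K) : K⟦X⟧ :=
  mk fun n => a n / n.factorial

theorem exp_eq_egf_one [Algebra ℚ K] : exp K = egf 1 := by
  ext n
  simp [egf, coeff_exp]

theorem coeff_egf_mul_egf [CharZero K] (a b : ℕ → K) (n : ℕ) :
    coeff n (egf a * egf b) =
      (∑ p ∈ antidiagonal n, n.choose p.1 * a p.1 * b p.2) / n.factorial := by
  rw [coeff_mul, sum_div]
  refine sum_congr rfl fun ⟨i, j⟩ hij => ?_
  obtain rfl : i + j = n := mem_antidiagonal.1 hij
  have : ((i + j).factorial : K) ≠ 0 := mod_cast (i + j).factorial_ne_zero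
  simp only [egf, coeff_mk, Nat.cast_add_choose]
  field_simp

end ExponentialGeneratingFunction

theorem exp_mul_egf_numRankings :
    exp ℚ * egf (fun n => (numRankings n : ℚ)) = 2 * egf (fun n => (numRankings n : ℚ)) - 1 := by
  ext n
  rw [exp_eq_egf_one, coeff_egf_mul_egf, two_mul, map_sub, map_add, coeff_one]
  rcases eq_or_ne n 0 with rfl | hn
  · simp [egf, numRankings_zero]
  · simp only [egf, coeff_mk, Pi.one_apply, mul_one, if_neg hn, sub_zero]
    rw_mod_cast [sum_choose_mul_numRankings hn]
    push_cast
    ring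

/-- The exponential generating function of the numbers of rankings (with the `0`-th
coefficient set to `0`) satisfies `∑_{n} r_n x^n/n! = (e^x − 1)/(2 − e^x)`, i.e.
`(2 − e^x) · ∑_n r_n x^n/n! = e^x − 1` as formal power series over `ℚ`. -/
theorem rankings_egf :
    (2 - PowerSeries.exp ℚ) *
        PowerSeries.mk (fun n => if n = 0 then 0 else (numRankings n : ℚ) / n.factorial) =
      PowerSeries.exp ℚ - 1 := by
  have hshift : PowerSeries.mk (fun n => if n = 0 then 0 else (numRankings n : ℚ) / n.factorial) =
      egf (fun n => (numRankings n : ℚ)) - 1 := by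
    ext n
    rcases eq_or_ne n 0 with rfl | hn
    · simp [egf, numRankings_zero]
    · simp [egf, coeff_one, hn]
  rw [hshift]
  linear_combination -exp_mul_egf_numRankings
end
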